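/- arXiv:1706.07863 — 7 statements merged into one kernel-verified Lean document; each statement's English description precedes it below -/
import Mathlib

section
/- Let C0, C1 be cycles of coprime lengths m and n, with X-indicator functions x0 : Fin m → {0,1} and x1 : Fin n → {0,1} and assignments α0 : Fin m → ℝ≥0, α1 : Fin n → ℝ≥0. Define the X-count at shift s of cycle j as the sum over i of x_j(i) * α_j((i - s) mod |C_j|). Then the maximum over s ∈ ℕ of the sum of the two X-counts at shift s equals the sum of the individual maxima: max_s (⟨C0, α0^{↺s}⟩^X + ⟨C1, α1^{↺s}⟩^X) = max_s ⟨C0, α0^{↺s}⟩^X + max_s ⟨C1, α1^{↺s}⟩^X. -/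
/-- The `X`-count at shift `s` of a cycle of length `L` with `X`-indicator `x`
and assignment `α` (both given as functions on `ℕ`, only indices `< L` matter):
`⟨C, α^{↺s}⟩^X = Σ_{i < L} x i * α ((i - s) mod L)`. -/
noncomputable def xcount (L : ℕ) (x α : ℕ → ℝ) (s : ℕ) : ℝ :=
  ∑ i ∈ Finset.range L, x i * α ((i + (L - s % L)) % L)

lemma xcount_mod (L : ℕ) (x α : ℕ → ℝ) (s : ℕ) :
    xcount L x α s = xcount L x α (s % L) := by
  simp [xcount, Nat.mod_mod_of_dvd]

lemma xcount_exists_max (L : ℕ) (hL : 0 < L) (x α : ℕ → ℝ) :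
    ∃ s0, ∀ s, xcount L x α s ≤ xcount L x α s0 := by
  obtain ⟨s0, hs0, hmax⟩ := Finset.exists_max_image (Finset.range L) (xcount L x α)
    ⟨0, Finset.mem_range.2 hL⟩
  exact ⟨s0, fun s => (xcount_mod L x α s).le.trans
    (hmax _ (Finset.mem_range.2 (Nat.mod_lt _ hL)))⟩

theorem joint_maxcount_coprime (m n : ℕ) (hm : 0 < m) (hn : 0 < n)
    (hco : Nat.Coprime m n)
    (x0 x1 α0 α1 : ℕ → ℝ)
    (hx0 : ∀ i, x0 i = 0 ∨ x0 i = 1) (hx1 : ∀ i, x1 i = 0 ∨ x1 i = 1)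
    (hα0 : ∀ i, 0 ≤ α0 i) (hα1 : ∀ i, 0 ≤ α1 i) :
    (⨆ s : ℕ, (xcount m x0 α0 s + xcount n x1 α1 s)) =
      (⨆ s : ℕ, xcount m x0 α0 s) + (⨆ s : ℕ, xcount n x1 α1 s) := by
  obtain ⟨s0, h0⟩ := xcount_exists_max m hm x0 α0
  obtain ⟨s1, h1⟩ := xcount_exists_max n hn x1 α1
  have hf : (⨆ s : ℕ, xcount m x0 α0 s) = xcount m x0 α0 s0 :=
    le_antisymm (ciSup_le h0) (le_ciSup ⟨_, Set.forall_mem_range.2 h0⟩ s0)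
  have hg : (⨆ s : ℕ, xcount n x1 α1 s) = xcount n x1 α1 s1 :=
    le_antisymm (ciSup_le h1) (le_ciSup ⟨_, Set.forall_mem_range.2 h1⟩ s1)
  obtain ⟨k, hk0, hk1⟩ := Nat.chineseRemainder hco s0 s1
  have hkey : xcount m x0 α0 k + xcount n x1 α1 k
      = xcount m x0 α0 s0 + xcount n x1 α1 s1 := by
    rw [xcount_mod m x0 α0 k, xcount_mod n x1 α1 k,
      show k % m = s0 % m from hk0, show k % n = s1 % n from hk1,
      ← xcount_mod, ← xcount_mod]
  have hb : ∀ s, xcount m x0 α0 s + xcount n x1 α1 s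
      ≤ xcount m x0 α0 s0 + xcount n x1 α1 s1 :=
    fun s => add_le_add (h0 s) (h1 s)
  rw [hf, hg]
  exact le_antisymm (ciSup_le hb)
    (hkey ▸ le_ciSup ⟨_, Set.forall_mem_range.2 hb⟩ k)
end

section
/- Let L, N be positive integers with N < L, let x : Fin L → {0,1}, and define R = Σ_i x(i). For any 0/1 assignment α : Fin L → {0,1} with Σ_i α(i) = N, and the constant assignment ᾱ(i) = N/L, the difference of maximal X-counts satisfies max_s Σ_i x(i)·α^{↺s}(i) − max_s Σ_i x(i)·ᾱ^{↺s}(i) ≤ min(R, N) − (N/L)·R ≤ L/4. -/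
lemma key_mod (L a b d : ℕ) (hL : 0 < L) (ha : a < L) (h : (b + d) % L = 0) :
    ((a + b) % L + d) % L = a := by
  rw [Nat.mod_add_mod, add_assoc, Nat.add_mod, h, Nat.add_zero]
  simp [Nat.mod_eq_of_lt ha]

lemma comp_zero (L c : ℕ) (hL : 0 < L) : (c + (L - c % L)) % L = 0 := by
  have h1 : c % L < L := Nat.mod_lt _ hL
  have h2 : L * (c / L) + c % L = c := Nat.div_add_mod c L
  have : c + (L - c % L) = L * (c / L) + L := by omega
  rw [this]
  simp [Nat.add_mod, Nat.mul_mod_right]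

lemma sum_shift (L : ℕ) (hL : 0 < L) (c : ℕ) (f : ℕ → ℝ) :
    ∑ i ∈ Finset.range L, f ((i + c) % L) = ∑ i ∈ Finset.range L, f i := by
  apply Finset.sum_nbij' (fun i => (i + c) % L) (fun j => (j + (L - c % L)) % L)
  · intro a ha
    exact Finset.mem_range.mpr (Nat.mod_lt _ hL)
  · intro a ha
    exact Finset.mem_range.mpr (Nat.mod_lt _ hL)
  · intro a ha
    exact key_mod L a c (L - c % L) hL (Finset.mem_range.mp ha) (comp_zero L c hL)
  · intro a ha
    refine key_mod L a (L - c % L) c hL (Finset.mem_range.mp ha) ?_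
    rw [Nat.add_comm]; exact comp_zero L c hL
  · intro a ha; rfl

theorem rounding_gap_bound (L N : ℕ) (hL : 0 < L) (hN : 0 < N) (hNL : N < L)
    (x α : ℕ → ℝ) (hx : ∀ i, x i = 0 ∨ x i = 1) (hα : ∀ i, α i = 0 ∨ α i = 1)
    (hsum : ∑ i ∈ Finset.range L, α i = N)
    (R : ℝ) (hR : R = ∑ i ∈ Finset.range L, x i) :
    (⨆ s : ℕ, xcount L x α s) - (⨆ s : ℕ, xcount L x (fun _ => (N : ℝ) / L) s)
        ≤ min R N - ((N : ℝ) / L) * R ∧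
      min R (N : ℝ) - ((N : ℝ) / L) * R ≤ (L : ℝ) / 4 := by
  have hx0 : ∀ i, 0 ≤ x i := fun i => by rcases hx i with h | h <;> simp [h]
  have hx1 : ∀ i, x i ≤ 1 := fun i => by rcases hx i with h | h <;> simp [h]
  have hα0 : ∀ i, 0 ≤ α i := fun i => by rcases hα i with h | h <;> simp [h]
  have hα1 : ∀ i, α i ≤ 1 := fun i => by rcases hα i with h | h <;> simp [h]
  have hR0 : 0 ≤ R := hR ▸ Finset.sum_nonneg (fun i _ => hx0 i)
  have hL0 : (0 : ℝ) < L := by exact_mod_cast hL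
  have hNL' : (N : ℝ) < L := by exact_mod_cast hNL
  have hN0 : (0 : ℝ) < N := by exact_mod_cast hN
  constructor
  · -- second sup is constant
    have hconst : ∀ s : ℕ, xcount L x (fun _ => (N : ℝ) / L) s = ((N : ℝ) / L) * R := by
      intro s
      simp only [xcount, hR, Finset.sum_mul]
      rw [Finset.mul_sum]
      exact Finset.sum_congr rfl (fun i _ => by ring)
    have h2 : (⨆ s : ℕ, xcount L x (fun _ => (N : ℝ) / L) s) = ((N : ℝ) / L) * R := by
      simp only [hconst]; exact ciSup_const
    rw [h2]
    apply sub_le_sub_right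
    apply ciSup_le
    intro s
    apply le_min
    · -- ≤ R
      rw [hR]
      apply Finset.sum_le_sum
      intro i _
      calc x i * α ((i + (L - s % L)) % L) ≤ x i * 1 :=
            mul_le_mul_of_nonneg_left (hα1 _) (hx0 i)
        _ = x i := mul_one _
    · -- ≤ N
      calc xcount L x α s ≤ ∑ i ∈ Finset.range L, α ((i + (L - s % L)) % L) := by
            apply Finset.sum_le_sum
            intro i _
            calc x i * α ((i + (L - s % L)) % L) ≤ 1 * α ((i + (L - s % L)) % L) :=
                  mul_le_mul_of_nonneg_right (hx1 i) (hα0 _)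
              _ = _ := one_mul _
        _ = ∑ i ∈ Finset.range L, α i := sum_shift L hL _ α
        _ = N := hsum
  · have hdiv : (N : ℝ) / L * R * L = N * R := by field_simp
    rcases le_total R (N : ℝ) with h | h
    · rw [min_eq_left h]
      nlinarith [sq_nonneg ((L : ℝ) - 2 * N), mul_nonneg (sub_nonneg.mpr h) (sub_nonneg.mpr hNL'.le), hdiv]
    · rw [min_eq_right h]
      nlinarith [sq_nonneg ((L : ℝ) - 2 * N), mul_nonneg (sub_nonneg.mpr h) hN0.le, hdiv]
end

section
/- Let L, N be positive integers, x : Fin L → {0,1} with the support of x equal to a set of R consecutive indices (circularly). Let α̃ be the pseudo-periodic assignment of total weight N as above (α̃(i) ∈ {κ1, κ1+1} with κ1+1 at positions ⌊dk⌋, d = L/κ2, κ2 = N mod L). Then max_s Σ_i x(i)·α̃^{↺s}(i) ≤ (N/L)·R + 1, i.e., the maximal X-count of the rounded assignment exceeds that of the average assignment by at most 1. -/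
open Classical in
/-- Pseudo-periodic assignment of total weight `N` on a cycle of length `L`:
with `κ1 = ⌊N/L⌋`, `κ2 = N mod L`, `d = L/κ2`, positions `⌊d·k⌋` (`k < κ2`)
receive `κ1 + 1` units and all other positions receive `κ1` units. -/
noncomputable def atilde (L N : ℕ) (i : ℕ) : ℝ :=
  if ∃ k < N % L, i = Nat.floor ((L : ℝ) / (N % L : ℕ) * k)
  then ((N / L : ℕ) : ℝ) + 1 else ((N / L : ℕ) : ℝ)

open Finset

noncomputable def markPos (L c k : ℕ) : ℕ := ⌊(L : ℝ) / c * k⌋₊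

lemma markPos_add_mul (L : ℕ) {c : ℕ} (hc : c ≠ 0) (k q : ℕ) :
    markPos L c (k + q * c) = markPos L c k + q * L := by
  have hshift : (L : ℝ) / c * ((k + q * c : ℕ) : ℝ) = L / c * k + (q * L : ℕ) := by
    push_cast
    field_simp
  rw [markPos, hshift, Nat.floor_add_natCast (by positivity), markPos]

lemma markPos_lt {L c k : ℕ} (hL : 0 < L) (hk : k < c) : markPos L c k < L := by
  have hc : (0 : ℝ) < c := by exact_mod_cast Nat.zero_lt_of_lt hk
  rw [markPos, Nat.floor_lt (by positivity), div_mul_eq_mul_div, div_lt_iff₀ hc]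
  exact mul_lt_mul_of_pos_left (by exact_mod_cast hk) (by exact_mod_cast hL)

lemma exists_markPos_mod_iff {L c : ℕ} (hL : 0 < L) (hc : c ≠ 0) (m : ℕ) :
    (∃ k < c, m % L = markPos L c k) ↔ ∃ k, m = markPos L c k := by
  constructor
  · rintro ⟨k, -, hk⟩
    refine ⟨k + m / L * c, ?_⟩
    rw [markPos_add_mul L hc, ← hk, Nat.mod_add_div' m L]
  · rintro ⟨k, rfl⟩
    have hr : k % c < c := Nat.mod_lt k (Nat.pos_of_ne_zero hc)
    refine ⟨k % c, hr, ?_⟩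
    conv_lhs => rw [← Nat.mod_add_div' k c, markPos_add_mul L hc]
    rw [Nat.add_mul_mod_self_right, Nat.mod_eq_of_lt (markPos_lt hL hr)]

open scoped Classical in
lemma card_filter_exists_floor_mul_le {d : ℝ} (hd : 0 < d) (a R : ℕ) :
    #{j ∈ range R | ∃ k : ℕ, a + j = ⌊d * k⌋₊} ≤ ⌈(R : ℝ) / d⌉₊ := by
  have hsub : {j ∈ range R | ∃ k : ℕ, a + j = ⌊d * k⌋₊} ⊆
      (Ico ⌈(a : ℝ) / d⌉₊ ⌈((a + R : ℕ) : ℝ) / d⌉₊).image (fun k : ℕ => ⌊d * k⌋₊ - a) := by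
    intro j hj
    obtain ⟨hjR, k, hk⟩ := by simpa only [mem_filter, mem_range] using hj
    have hlo : (a : ℝ) ≤ d * k := (Nat.le_floor_iff (by positivity)).mp (by omega)
    have hhi : d * k < ((a + R : ℕ) : ℝ) := (Nat.floor_lt (by positivity)).mp (by omega)
    refine mem_image.mpr ⟨k, mem_Ico.mpr ⟨?_, ?_⟩, by omega⟩
    · exact Nat.ceil_le.mpr ((div_le_iff₀ hd).mpr (by linarith))
    · exact Nat.lt_ceil.mpr ((lt_div_iff₀ hd).mpr (by linarith))
  have hceil : ⌈((a + R : ℕ) : ℝ) / d⌉₊ ≤ ⌈(a : ℝ) / d⌉₊ + ⌈(R : ℝ) / d⌉₊ := by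
    rw [Nat.cast_add, add_div]
    exact Nat.ceil_add_le _ _
  calc #{j ∈ range R | ∃ k : ℕ, a + j = ⌊d * k⌋₊}
      ≤ #(Ico ⌈(a : ℝ) / d⌉₊ ⌈((a + R : ℕ) : ℝ) / d⌉₊) := (card_le_card hsub).trans card_image_le
    _ ≤ ⌈(R : ℝ) / d⌉₊ := by rw [Nat.card_Ico]; omega

lemma card_window_marks_le {L : ℕ} (hL : 0 < L) (c a R : ℕ) :
    (#{j ∈ range R | ∃ k < c, (a + j) % L = markPos L c k} : ℝ) ≤ R * c / L + 1 := by
  rcases Nat.eq_zero_or_pos c with rfl | hc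
  · simp
  classical
  have hd : (0 : ℝ) < L / c := by positivity
  simp_rw [exists_markPos_mod_iff hL hc.ne']
  calc (#{j ∈ range R | ∃ k, a + j = markPos L c k} : ℝ)
      ≤ ⌈(R : ℝ) / (L / c)⌉₊ := by exact_mod_cast card_filter_exists_floor_mul_le hd a R
    _ ≤ R / (L / c) + 1 := (Nat.ceil_lt_add_one (by positivity)).le
    _ = R * c / L + 1 := by rw [div_div_eq_mul_div]

lemma atilde_eq (L N m : ℕ) :
    atilde L N m = (N / L : ℕ) + if ∃ k < N % L, m = markPos L (N % L) k then 1 else 0 := by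
  unfold atilde markPos
  split_ifs <;> simp

lemma sum_atilde_window_le {L : ℕ} (hL : 0 < L) (N a R : ℕ) :
    ∑ j ∈ range R, atilde L N ((a + j) % L) ≤ (N : ℝ) / L * R + 1 := by
  have hdiv : (N : ℝ) / L = (N / L : ℕ) + (N % L : ℕ) / L := by
    rw [← Nat.div_add_mod N L]
    field_simp
    push_cast
    rw [Nat.mul_add_div hL, Nat.mul_add_mod, Nat.div_eq_of_lt (Nat.mod_lt N hL)]
    simp
  simp only [atilde_eq, sum_add_distrib, sum_const, card_range, nsmul_eq_mul, sum_boole]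
  have hmarks := card_window_marks_le hL (N % L) a R
  rw [hdiv, add_mul, mul_comm _ (R : ℝ), add_assoc, div_mul_eq_mul_div, mul_comm _ (R : ℝ)]
  gcongr

lemma sum_mul_eq_sum_window {L : ℕ} (x f : ℕ → ℝ) (hx : ∀ i, x i = 0 ∨ x i = 1)
    (i0 R : ℕ) (hRL : R ≤ L) (hsupp : ∀ i < L, (x i = 1 ↔ ∃ j < R, i = (i0 + j) % L)) :
    ∑ i ∈ range L, x i * f i = ∑ j ∈ range R, f ((i0 + j) % L) := by
  set W := (range R).image (fun j => (i0 + j) % L)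
  have hW : W ⊆ range L := fun i hi => by
    obtain ⟨j, hj, rfl⟩ := mem_image.mp hi
    exact mem_range.mpr (Nat.mod_lt _ (Nat.zero_lt_of_lt ((mem_range.mp hj).trans_le hRL)))
  have hinj : Set.InjOn (fun j => (i0 + j) % L) (range R) := fun j hj j' hj' h =>
    Nat.ModEq.eq_of_lt_of_lt (Nat.ModEq.add_left_cancel' i0 h)
      ((mem_range.mp hj).trans_le hRL) ((mem_range.mp hj').trans_le hRL)
  have hxW : ∀ i ∈ range L, x i * f i = if i ∈ W then f i else 0 := by
    intro i hi
    have hmem : x i = 1 ↔ i ∈ W := by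
      simp only [hsupp i (mem_range.mp hi), W, mem_image, mem_range, eq_comm]
    rcases hx i with h | h
    · simp [h, ← hmem]
    · simp [h, hmem.mp h]
  rw [sum_congr rfl hxW, sum_ite_mem, inter_eq_right.mpr hW, sum_image hinj]

theorem pseudo_periodic_count_bound_general (L N : ℕ) (hL : 0 < L)
    (x : ℕ → ℝ) (hx : ∀ i, x i = 0 ∨ x i = 1)
    (i0 R : ℕ) (hRL : R ≤ L)
    (hsupp : ∀ i < L, (x i = 1 ↔ ∃ j < R, i = (i0 + j) % L)) :
    (⨆ s : ℕ, xcount L x (atilde L N) s) ≤ (N : ℝ) / L * R + 1 := by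
  refine ciSup_le fun s => ?_
  rw [xcount, sum_mul_eq_sum_window x _ hx i0 R hRL hsupp]
  simp only [Nat.mod_add_mod, add_right_comm i0 _ (L - s % L)]
  exact sum_atilde_window_le hL N _ R

theorem pseudo_periodic_count_bound (L N : ℕ) (hL : 0 < L) (hN : 0 < N)
    (x : ℕ → ℝ) (hx : ∀ i, x i = 0 ∨ x i = 1)
    (i0 R : ℕ) (hRL : R ≤ L)
    (hsupp : ∀ i < L, (x i = 1 ↔ ∃ j < R, i = (i0 + j) % L)) :
    (⨆ s : ℕ, xcount L x (atilde L N) s) ≤ (N : ℝ) / L * R + 1 :=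
  pseudo_periodic_count_bound_general L N hL x hx i0 R hRL hsupp
end

section
/- Let L be a positive integer and x : Fin L → {0,1} such that the support of x is a union of p circularly-consecutive segments. With α̃ the pseudo-periodic assignment of total weight N, max_s Σ_i x(i)·α̃^{↺s}(i) ≤ (N/L)·Σ_i x(i) + p. -/
open Finset

/-
The pseudo-periodic assignment is the difference sequence of `n ↦ ⌈n N / L⌉`, i.e.
`α̃ (n mod L) = N / L + e (n + 1) - e n` with the `L`-periodic ceiling excess
`e n = ⌈n N / L⌉ - n N / L ∈ [0, 1)`. Summed over a set `T` of positions of the cycle (shifted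
or not), the `e`-terms telescope except at the positions of `T` whose successor leaves `T`, each
of which costs at most `1`; a union of `p` segments has at most `p` such positions, namely the segment ends.
-/

theorem Nat.ceil_lt_ceil_iff_exists {α : Type*} [Semiring α] [LinearOrder α]
    [IsStrictOrderedRing α] [FloorSemiring α] {u v : α} :
    ⌈u⌉₊ < ⌈v⌉₊ ↔ ∃ k : ℕ, u ≤ k ∧ k < v :=
  ⟨fun h => ⟨⌈u⌉₊, Nat.le_ceil u, Nat.lt_ceil.mp h⟩,
    fun ⟨_, huk, hkv⟩ => (Nat.ceil_le.mpr huk).trans_lt (Nat.lt_ceil.mpr hkv)⟩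

theorem sum_comp_le_sum_add_card_filter {ι : Type*} [DecidableEq ι] (T : Finset ι) {σ : ι → ι}
    (hσ : Set.InjOn σ T) {g : ι → ℝ} (hg0 : ∀ i ∈ T, 0 ≤ g i) (hg1 : ∀ i ∈ T, g (σ i) ≤ 1) :
    ∑ i ∈ T, g (σ i) ≤ ∑ i ∈ T, g i + #{i ∈ T | σ i ∉ T} := by
  rw [← sum_filter_add_sum_filter_not T (fun i => σ i ∈ T)]
  gcongr
  · rw [← sum_image (hσ.mono (filter_subset _ T))]
    refine sum_le_sum_of_subset_of_nonneg ?_ fun i hi _ => hg0 i hi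
    intro j hj
    obtain ⟨i, hi, rfl⟩ := mem_image.1 hj
    exact (mem_filter.1 hi).2
  · simpa using sum_le_card_nsmul _ _ 1 fun i hi => hg1 i (mem_filter.1 hi).1

theorem succ_mod_injOn (L : ℕ) : Set.InjOn (fun i => (i + 1) % L) (range L) := by
  intro i hi j hj h
  have := Nat.ModEq.add_right_cancel' 1 h
  rwa [Nat.ModEq, Nat.mod_eq_of_lt (mem_range.1 hi), Nat.mod_eq_of_lt (mem_range.1 hj)] at this

theorem eq_floor_div_mul_iff {L r i k : ℕ} (hL : 0 < L) (hr : 0 < r) :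
    i = ⌊(L : ℝ) / r * k⌋₊ ↔ (i * r / L : ℝ) ≤ k ∧ (k : ℝ) < (i + 1) * r / L := by
  have hL' : (0 : ℝ) < L := by exact_mod_cast hL
  have hr' : (0 : ℝ) < r := by exact_mod_cast hr
  rw [eq_comm, Nat.floor_eq_iff (by positivity), div_le_iff₀ hL', lt_div_iff₀ hL',
    div_mul_eq_mul_div, le_div_iff₀ hr', div_lt_iff₀ hr']
  constructor <;> rintro ⟨h1, h2⟩ <;> constructor <;> linarith

theorem exists_eq_floor_iff_ceil_lt_ceil {L r i : ℕ} (hi : i < L) :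
    (∃ k < r, i = ⌊(L : ℝ) / r * k⌋₊) ↔ ⌈(i * r / L : ℝ)⌉₊ < ⌈((i + 1) * r / L : ℝ)⌉₊ := by
  rcases Nat.eq_zero_or_pos r with rfl | hr
  · simp
  have hL : 0 < L := by omega
  rw [Nat.ceil_lt_ceil_iff_exists]
  simp only [eq_floor_div_mul_iff hL hr]
  refine ⟨fun ⟨k, _, hk⟩ => ⟨k, hk⟩, fun ⟨k, hk⟩ => ⟨k, ?_, hk⟩⟩
  have hiL : (i : ℝ) + 1 ≤ L := by exact_mod_cast hi
  have : (k : ℝ) < r := hk.2.trans_le <| by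
    rw [div_le_iff₀ (by exact_mod_cast hL)]
    nlinarith [(Nat.cast_nonneg r : (0 : ℝ) ≤ r)]
  exact_mod_cast this

theorem ceil_succ_mul_div_le {L r : ℕ} (hr : r ≤ L) (i : ℕ) :
    ⌈((i + 1) * r / L : ℝ)⌉₊ ≤ ⌈(i * r / L : ℝ)⌉₊ + 1 := by
  rw [← Nat.ceil_add_one (by positivity)]
  refine Nat.ceil_mono ?_
  rw [add_mul, one_mul, add_div]
  gcongr
  exact div_le_one_of_le₀ (by exact_mod_cast hr) (Nat.cast_nonneg L)

open Classical in
theorem ite_exists_eq_floor_eq_add_ceil_sub_ceil {L r i : ℕ} (hr : r < L) (hi : i < L) (a : ℝ) :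
    (if ∃ k < r, i = ⌊(L : ℝ) / (r : ℕ) * k⌋₊ then a + 1 else a)
      = a + ⌈((i + 1) * r / L : ℝ)⌉₊ - ⌈(i * r / L : ℝ)⌉₊ := by
  have hmono : ⌈(i * r / L : ℝ)⌉₊ ≤ ⌈((i + 1) * r / L : ℝ)⌉₊ := Nat.ceil_mono (by gcongr; simp)
  have hle := ceil_succ_mul_div_le hr.le i
  split_ifs with h <;> rw [exists_eq_floor_iff_ceil_lt_ceil hi] at h
  · rw [show ⌈((i + 1) * r / L : ℝ)⌉₊ = ⌈(i * r / L : ℝ)⌉₊ + 1 by omega]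
    push_cast
    ring
  · rw [show ⌈((i + 1) * r / L : ℝ)⌉₊ = ⌈(i * r / L : ℝ)⌉₊ by omega]
    ring

theorem ceil_add_mul_mul_div {L : ℕ} (hL : L ≠ 0) (a r m q : ℕ) :
    ⌈((a + L * m : ℕ) * (r + L * q : ℕ) / L : ℝ)⌉₊
      = ⌈(a * r / L : ℝ)⌉₊ + (a * q + m * (r + L * q)) := by
  have hL' : (L : ℝ) ≠ 0 := by exact_mod_cast hL
  have : ((a + L * m : ℕ) * (r + L * q : ℕ) / L : ℝ)
      = a * r / L + ((a * q + m * (r + L * q) : ℕ) : ℝ) := by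
    push_cast
    field_simp
    ring
  rw [this, Nat.ceil_add_natCast (by positivity)]

theorem atilde_mod_eq {L : ℕ} (hL : 0 < L) (N n : ℕ) :
    atilde L N (n % L) = (⌈((n + 1) * N / L : ℝ)⌉₊ : ℝ) - ⌈(n * N / L : ℝ)⌉₊ := by
  rw [atilde, ite_exists_eq_floor_eq_add_ceil_sub_ceil (Nat.mod_lt N hL) (Nat.mod_lt n hL)]
  conv_rhs => rw [← Nat.mod_add_div n L, ← Nat.mod_add_div N L]
  generalize n % L = i, n / L = m, N % L = r, N / L = q
  rw [show ((i + L * m : ℕ) + 1 : ℝ) = ((i + 1 + L * m : ℕ) : ℝ) by push_cast; ring,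
    ceil_add_mul_mul_div hL.ne', ceil_add_mul_mul_div hL.ne']
  push_cast
  ring

noncomputable def ceilExcess (L N n : ℕ) : ℝ := ⌈(n * N / L : ℝ)⌉₊ - n * N / L

theorem ceilExcess_nonneg (L N n : ℕ) : 0 ≤ ceilExcess L N n :=
  sub_nonneg.2 (Nat.le_ceil _)

theorem ceilExcess_lt_one (L N n : ℕ) : ceilExcess L N n < 1 :=
  sub_lt_iff_lt_add'.2 (Nat.ceil_lt_add_one (by positivity))

theorem ceilExcess_mod (L N n : ℕ) : ceilExcess L N (n % L) = ceilExcess L N n := by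
  rcases Nat.eq_zero_or_pos L with rfl | hL
  · rw [Nat.mod_zero]
  have : (n * N / L : ℝ) = (n % L : ℕ) * N / L + ((n / L * N : ℕ) : ℝ) := by
    conv_lhs => rw [← Nat.mod_add_div n L]
    push_cast
    field_simp
  rw [ceilExcess, ceilExcess, this, Nat.ceil_add_natCast (by positivity)]
  push_cast
  ring

theorem atilde_mod_eq_add_ceilExcess {L : ℕ} (hL : 0 < L) (N n : ℕ) :
    atilde L N (n % L) = N / L + ceilExcess L N (n + 1) - ceilExcess L N n := by
  rw [atilde_mod_eq hL, ceilExcess, ceilExcess]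
  push_cast
  ring

theorem sum_atilde_add_mod_le {L : ℕ} (hL : 0 < L) (N d : ℕ) {T : Finset ℕ} (hT : T ⊆ range L) :
    ∑ i ∈ T, atilde L N ((i + d) % L) ≤ N / L * #T + #{i ∈ T | (i + 1) % L ∉ T} := by
  have hatilde : ∀ i, atilde L N ((i + d) % L)
      = N / L + ceilExcess L N ((i + 1) % L + d) - ceilExcess L N (i + d) := by
    intro i
    rw [← ceilExcess_mod L N ((i + 1) % L + d), Nat.mod_add_mod, ceilExcess_mod,
      atilde_mod_eq_add_ceilExcess hL, add_right_comm]
  have htele := sum_comp_le_sum_add_card_filter T ((succ_mod_injOn L).mono hT)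
    (g := fun i => ceilExcess L N (i + d)) (fun i _ => ceilExcess_nonneg L N _)
    (fun i _ => (ceilExcess_lt_one L N _).le)
  simp only [hatilde, sum_sub_distrib, sum_add_distrib, sum_const, nsmul_eq_mul]
  linarith

theorem card_filter_succ_mod_not_mem_le {L p : ℕ} {T : Finset ℕ} {start len : ℕ → ℕ}
    (hT : ∀ i, i ∈ T ↔ ∃ j < p, ∃ t < len j, i = (start j + t) % L) :
    #{i ∈ T | (i + 1) % L ∉ T} ≤ p := by
  calc #{i ∈ T | (i + 1) % L ∉ T}
      ≤ #((range p).image fun j => (start j + (len j - 1)) % L) := card_le_card ?_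
    _ ≤ p := card_image_le.trans (card_range p).le
  intro i hi
  obtain ⟨hiT, hsucc⟩ := mem_filter.1 hi
  obtain ⟨j, hj, t, ht, rfl⟩ := (hT i).1 hiT
  have hlast : t + 1 = len j := by
    by_contra hne
    exact hsucc ((hT _).2 ⟨j, hj, t + 1, by omega, by rw [Nat.mod_add_mod, add_assoc]⟩)
  exact mem_image.2 ⟨j, mem_range.2 hj, by rw [← hlast, Nat.add_sub_cancel]⟩

theorem pseudo_periodic_count_bound_segments_general (L N p : ℕ) (hL : 0 < L)
    (x : ℕ → ℝ) (hx : ∀ i, x i = 0 ∨ x i = 1)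
    (start len : ℕ → ℕ)
    (hsupp : ∀ i < L,
      (x i = 1 ↔ ∃ j < p, ∃ t < len j, i = (start j + t) % L)) :
    (⨆ s : ℕ, xcount L x (atilde L N) s)
      ≤ (N : ℝ) / L * (∑ i ∈ Finset.range L, x i) + p := by
  set T := (range L).filter (fun i => x i = 1)
  have hsum : ∀ f : ℕ → ℝ, ∑ i ∈ range L, x i * f i = ∑ i ∈ T, f i := by
    intro f
    rw [sum_filter]
    refine sum_congr rfl fun i _ => ?_
    rcases hx i with h | h <;> simp [h]
  have hcard : ∑ i ∈ range L, x i = #T := by simpa using hsum 1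
  have hmem : ∀ i, i ∈ T ↔ ∃ j < p, ∃ t < len j, i = (start j + t) % L := by
    intro i
    simp only [T, mem_filter, mem_range]
    refine ⟨fun ⟨hi, hxi⟩ => (hsupp i hi).1 hxi, ?_⟩
    rintro ⟨j, hj, t, ht, rfl⟩
    exact ⟨Nat.mod_lt _ hL, (hsupp _ (Nat.mod_lt _ hL)).2 ⟨j, hj, t, ht, rfl⟩⟩
  have hends : (#{i ∈ T | (i + 1) % L ∉ T} : ℝ) ≤ p := by
    exact_mod_cast card_filter_succ_mod_not_mem_le hmem
  refine ciSup_le fun s => ?_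
  calc xcount L x (atilde L N) s = ∑ i ∈ T, atilde L N ((i + (L - s % L)) % L) := hsum _
    _ ≤ N / L * #T + #{i ∈ T | (i + 1) % L ∉ T} :=
      sum_atilde_add_mod_le hL N _ (filter_subset _ _)
    _ ≤ N / L * (∑ i ∈ range L, x i) + p := by rw [hcard]; linarith

theorem pseudo_periodic_count_bound_segments (L N p : ℕ) (hL : 0 < L) (hN : 0 < N)
    (x : ℕ → ℝ) (hx : ∀ i, x i = 0 ∨ x i = 1)
    (start len : ℕ → ℕ)
    (hsupp : ∀ i < L,
      (x i = 1 ↔ ∃ j < p, ∃ t < len j, i = (start j + t) % L)) :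
    (⨆ s : ℕ, xcount L x (atilde L N) s)
      ≤ (N : ℝ) / L * (∑ i ∈ Finset.range L, x i) + p :=
  pseudo_periodic_count_bound_segments_general L N p hL x hx start len hsupp
end

section
/- Let L, N be positive integers with N < L, x : Fin L → {0,1}, R = Σ_i x(i), and let α̃ be any 0/1 assignment on Fin L with Σ_i α̃(i) = N. Then max_s Σ_i x(i)·α̃^{↺s}(i) ≤ (N/L)·R + L/4. -/
lemma shift_mod_aux (L a t : ℕ) (ha : a < L) :
    ((a + t) % L + (L - t % L)) % L = a := by
  have hL : 0 < L := lt_of_le_of_lt (Nat.zero_le a) ha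
  have hu : t % L < L := Nat.mod_lt _ hL
  obtain ⟨k, hk⟩ := Nat.dvd_sub_mod (n := L) t
  rw [Nat.mod_add_mod]
  have h1 : a + t + (L - t % L) = a + L * (k + 1) := by
    have h2 : t % L ≤ t := Nat.mod_le _ _
    have h3 : L * (k + 1) = L * k + L := by ring
    omega
  rw [h1, Nat.add_mul_mod_self_left, Nat.mod_eq_of_lt ha]

lemma shift_mod_aux' (L a t : ℕ) (ha : a < L) :
    ((a + (L - t % L)) % L + t) % L = a := by
  have hL : 0 < L := lt_of_le_of_lt (Nat.zero_le a) ha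
  have hu : t % L < L := Nat.mod_lt _ hL
  obtain ⟨k, hk⟩ := Nat.dvd_sub_mod (n := L) t
  rw [Nat.mod_add_mod]
  have h1 : a + (L - t % L) + t = a + L * (k + 1) := by
    have h2 : t % L ≤ t := Nat.mod_le _ _
    have h3 : L * (k + 1) = L * k + L := by ring
    omega
  rw [h1, Nat.add_mul_mod_self_left, Nat.mod_eq_of_lt ha]

theorem worst_case_rounding_bound (L N : ℕ) (hL : 0 < L) (hN : 0 < N) (hNL : N < L)
    (x α : ℕ → ℝ) (hx : ∀ i, x i = 0 ∨ x i = 1) (hα : ∀ i, α i = 0 ∨ α i = 1)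
    (hsum : ∑ i ∈ Finset.range L, α i = N) :
    (⨆ s : ℕ, xcount L x α s)
      ≤ (N : ℝ) / L * (∑ i ∈ Finset.range L, x i) + (L : ℝ) / 4 := by
  set R := ∑ i ∈ Finset.range L, x i with hR
  have hx0 : ∀ i, 0 ≤ x i := fun i => by rcases hx i with h | h <;> simp [h]
  have hx1 : ∀ i, x i ≤ 1 := fun i => by rcases hx i with h | h <;> simp [h]
  have hα0 : ∀ i, 0 ≤ α i := fun i => by rcases hα i with h | h <;> simp [h]
  have hα1 : ∀ i, α i ≤ 1 := fun i => by rcases hα i with h | h <;> simp [h]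
  have hL' : (0:ℝ) < L := by exact_mod_cast hL
  have hN' : (0:ℝ) < N := by exact_mod_cast hN
  have hNL' : (N:ℝ) < L := by exact_mod_cast hNL
  have hRle : R ≤ L := by
    calc R ≤ ∑ _i ∈ Finset.range L, (1:ℝ) := Finset.sum_le_sum fun i _ => hx1 i
    _ = L := by simp
  have hR0 : 0 ≤ R := Finset.sum_nonneg fun i _ => hx0 i
  apply ciSup_le
  intro s
  have key : xcount L x α s ≤ min R N := by
    refine le_min ?_ ?_
    · unfold xcount
      apply Finset.sum_le_sum
      intro i _
      calc x i * α ((i + (L - s % L)) % L) ≤ x i * 1 :=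
            mul_le_mul_of_nonneg_left (hα1 _) (hx0 _)
        _ = x i := mul_one _
    · unfold xcount
      have h1 : ∑ i ∈ Finset.range L, x i * α ((i + (L - s % L)) % L)
          ≤ ∑ i ∈ Finset.range L, α ((i + (L - s % L)) % L) := by
        apply Finset.sum_le_sum
        intro i _
        calc x i * α ((i + (L - s % L)) % L) ≤ 1 * α ((i + (L - s % L)) % L) :=
              mul_le_mul_of_nonneg_right (hx1 _) (hα0 _)
          _ = _ := one_mul _
      refine h1.trans ?_
      set t := L - s % L with ht
      have hperm : ∑ i ∈ Finset.range L, α ((i + t) % L) = ∑ i ∈ Finset.range L, α i := by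
        apply Finset.sum_nbij' (fun i => (i + t) % L) (fun j => (j + (L - t % L)) % L)
        · intro a ha
          simp only [Finset.mem_range] at *
          exact Nat.mod_lt _ hL
        · intro a ha
          simp only [Finset.mem_range] at *
          exact Nat.mod_lt _ hL
        · intro a ha
          simp only [Finset.mem_range] at ha
          exact shift_mod_aux L a t ha
        · intro a ha
          simp only [Finset.mem_range] at ha
          exact shift_mod_aux' L a t ha
        · intro a ha
          rfl
      rw [hperm, hsum]
  refine key.trans ?_
  have heq : (N:ℝ)/L*R + (L:ℝ)/4 = ((N:ℝ)*R + (L:ℝ)*L/4)/L := by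
    rw [eq_div_iff (ne_of_gt hL')]
    field_simp
  rw [heq, le_div_iff₀ hL']
  rcases le_total R (N:ℝ) with h | h
  · rw [min_eq_left h]
    nlinarith [mul_nonneg (sub_nonneg.2 h) (sub_nonneg.2 hNL'.le), sq_nonneg ((L:ℝ) - 2*N)]
  · rw [min_eq_right h]
    nlinarith [mul_nonneg (sub_nonneg.2 h) hN'.le, sq_nonneg ((L:ℝ) - 2*N)]
end

section
/- Let G be a finite strongly connected aperiodic directed graph with vertex set Q and adjacency relation E, and let w, w' : Q → ℕ with Σ_q w(q) = Σ_q w'(q) = N. Then there exist T ∈ ℕ and functions w_s : Q → ℕ for s = 0,...,T and flows r_s : E → ℕ such that w_0 = w, w_T = w', and for all s < T: Σ_{(q,q') ∈ E} r_s(q,q') = w_s(q) for each q (outflow conservation), and w_{s+1}(q') = Σ_{(q,q') ∈ E} r_s(q,q') for each q' (inflow equation). -/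
/-- `Walk E n q q'` : there is a directed walk of length `n` from `q` to `q'`. -/
def Walk {Q : Type*} (E : Q → Q → Prop) : ℕ → Q → Q → Prop
  | 0, q, q' => q = q'
  | n + 1, q, q' => ∃ r, E q r ∧ Walk E n r q'

namespace AggAux

variable {Q : Type*}

lemma walk_trans {E : Q → Q → Prop} : ∀ {m n : ℕ} {a b c : Q},
    Walk E m a b → Walk E n b c → Walk E (m + n) a c := by
  intro m
  induction m with
  | zero =>
      intro n a b c h1 h2
      cases h1
      simpa using h2
  | succ k ih =>
      intro n a b c h1 h2
      obtain ⟨r, he, hwk⟩ := h1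
      have : k + 1 + n = (k + n) + 1 := by omega
      rw [this]
      exact ⟨r, he, ih hwk h2⟩

lemma walk_path {E : Q → Q → Prop} : ∀ {n : ℕ} {a b : Q}, Walk E n a b →
    ∃ p : ℕ → Q, p 0 = a ∧ p n = b ∧ ∀ s < n, E (p s) (p (s + 1)) := by
  intro n
  induction n with
  | zero =>
      intro a b h
      cases h
      exact ⟨fun _ => a, rfl, rfl, by omega⟩
  | succ k ih =>
      intro a b h
      obtain ⟨r, he, hwk⟩ := h
      obtain ⟨p, hp0, hpk, hpe⟩ := ih hwk
      refine ⟨fun s => Nat.casesOn s a (fun t => p t), rfl, hpk, ?_⟩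
      intro s hs
      cases s with
      | zero => simpa [hp0] using he
      | succ t => exact hpe t (by omega)

section C

variable {C : ℕ → Prop}

lemma C_mul (h0 : C 0) (hadd : ∀ m n, C m → C n → C (m + n)) :
    ∀ (k n : ℕ), C n → C (k * n) := by
  intro k
  induction k with
  | zero => intro n _; simpa using h0
  | succ j ih =>
      intro n hn
      have := hadd _ _ (ih n hn) hn
      simpa [Nat.succ_mul] using this

lemma bezout (h0 : C 0) (hadd : ∀ m n, C m → C n → C (m + n)) :
    ∀ A : Finset ℕ, (∀ x ∈ A, C x) → ∃ P M, C P ∧ C M ∧ P = M + A.gcd id := by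
  intro A
  induction A using Finset.induction_on with
  | empty => intro _; exact ⟨0, 0, h0, h0, by simp⟩
  | @insert x A hx ih =>
      intro hall
      have hCx : C x := hall x (Finset.mem_insert_self x A)
      obtain ⟨P, M, hP, hM, hPM⟩ := ih (fun y hy => hall y (Finset.mem_insert_of_mem hy))
      have hgins : (insert x A).gcd id = Nat.gcd x (A.gcd id) := by
        rw [Finset.gcd_insert]; rfl
      set g := A.gcd id with hg
      by_cases hx0 : x = 0
      · subst hx0
        exact ⟨P, M, hP, hM, by simpa [hgins] using hPM⟩
      by_cases hg0 : g = 0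
      · refine ⟨x, 0, hCx, h0, ?_⟩
        rw [hgins, hg0]
        simp
      · have hx1 : 1 ≤ x := Nat.one_le_iff_ne_zero.mpr hx0
        have hg1 : 1 ≤ g := Nat.one_le_iff_ne_zero.mpr hg0
        set a : ℤ := Nat.gcdA x g with ha
        set b : ℤ := Nat.gcdB x g with hb
        set k : ℕ := a.natAbs + b.natAbs + 1 with hk
        have hak : a.natAbs ≤ k := by omega
        have hbk : b.natAbs ≤ k := by omega
        have hu0 : 0 ≤ a + (k : ℤ) * g := by
          have h1 : (a.natAbs : ℤ) ≤ (k : ℤ) := by exact_mod_cast hak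
          have h2 : (k : ℤ) ≤ (k : ℤ) * g := by
            have : (1 : ℤ) ≤ (g : ℤ) := by exact_mod_cast hg1
            nlinarith [Int.ofNat_nonneg k]
          have hna : -(a.natAbs : ℤ) ≤ a := by
            rw [← Int.abs_eq_natAbs]; exact neg_abs_le a
          linarith
        have hv0 : 0 ≤ (k : ℤ) * x - b := by
          have h1 : (b.natAbs : ℤ) ≤ (k : ℤ) := by exact_mod_cast hbk
          have h2 : (k : ℤ) ≤ (k : ℤ) * x := by
            have : (1 : ℤ) ≤ (x : ℤ) := by exact_mod_cast hx1
            nlinarith [Int.ofNat_nonneg k]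
          have hba : b ≤ (b.natAbs : ℤ) := Int.le_natAbs
          linarith
        set u : ℕ := (a + (k : ℤ) * g).toNat with hu
        set v : ℕ := ((k : ℤ) * x - b).toNat with hv
        refine ⟨u * x + v * M, v * P, hadd _ _ (C_mul h0 hadd u x hCx) (C_mul h0 hadd v M hM),
          C_mul h0 hadd v P hP, ?_⟩
        rw [hgins]
        have hbez := Nat.gcd_eq_gcd_ab x g
        have key : (u : ℤ) * x + v * M = v * P + Nat.gcd x g := by
          have hP' : (P : ℤ) = (M : ℤ) + g := by exact_mod_cast hPM
          have hu' : (u : ℤ) = a + (k : ℤ) * g := Int.toNat_of_nonneg hu0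
          have hv' : (v : ℤ) = (k : ℤ) * x - b := Int.toNat_of_nonneg hv0
          rw [hu', hv', hP', hbez]
          ring
        exact_mod_cast key

lemma cofinite (h0 : C 0) (hadd : ∀ m n, C m → C n → C (m + n))
    {P M : ℕ} (hP : C P) (hM : C M) (hPM : P = M + 1) :
    ∀ n, C (M * M + n) := by
  intro n
  rcases Nat.eq_zero_or_pos M with h | h
  · subst h
    have h1 : P = 1 := by omega
    subst h1
    have := C_mul h0 hadd (0 * 0 + n) 1 hP
    simpa using this
  · set n' := M * M + n with hn'
    have hq : M ≤ n' / M := by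
      rw [Nat.le_div_iff_mul_le h]
      simp only [hn']
      exact Nat.le_add_right _ _
    have hr : n' % M < M := Nat.mod_lt _ h
    have hdm : M * (n' / M) + n' % M = n' := Nat.div_add_mod n' M
    obtain ⟨t, ht⟩ := Nat.exists_eq_add_of_le (le_trans hr.le hq)
    have key : n' = t * M + (n' % M) * P := by
      rw [hPM]
      rw [ht] at hdm
      calc n' = M * (n' % M + t) + n' % M := hdm.symm
        _ = t * M + n' % M * (M + 1) := by ring
    rw [key]
    exact hadd _ _ (C_mul h0 hadd t M hM) (C_mul h0 hadd (n' % M) P hP)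

end C

lemma transport {Q : Type*} [Fintype Q] :
    ∀ (N : ℕ) (w w' : Q → ℕ), (∑ q, w q) = N → (∑ q, w' q) = N →
      ∃ m : Q → Q → ℕ, (∀ a, ∑ b, m a b = w a) ∧ (∀ b, ∑ a, m a b = w' b) := by
  classical
  intro N
  induction N with
  | zero =>
      intro w w' hw hw'
      have hz : ∀ q, w q = 0 := fun q => Finset.sum_eq_zero_iff.mp hw q (Finset.mem_univ q)
      have hz' : ∀ q, w' q = 0 := fun q => Finset.sum_eq_zero_iff.mp hw' q (Finset.mem_univ q)
      exact ⟨fun _ _ => 0, fun a => by simp [hz], fun b => by simp [hz']⟩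
  | succ N ih =>
      intro w w' hw hw'
      have hea : ∃ a, w a ≠ 0 := by
        by_contra hcon
        push_neg at hcon
        simp [hcon] at hw
      have heb : ∃ b, w' b ≠ 0 := by
        by_contra hcon
        push_neg at hcon
        simp [hcon] at hw'
      obtain ⟨a, ha⟩ := hea
      obtain ⟨b, hb⟩ := heb
      set w1 := Function.update w a (w a - 1) with hw1
      set w1' := Function.update w' b (w' b - 1) with hw1'
      have hsum1 : ∑ q, w1 q = N := by
        have h1 : w a + ∑ q ∈ Finset.univ.erase a, w q = ∑ q, w q :=
          Finset.add_sum_erase _ w (Finset.mem_univ a)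
        have h2 : w1 a + ∑ q ∈ Finset.univ.erase a, w1 q = ∑ q, w1 q :=
          Finset.add_sum_erase _ w1 (Finset.mem_univ a)
        have h3 : ∑ q ∈ Finset.univ.erase a, w1 q = ∑ q ∈ Finset.univ.erase a, w q := by
          refine Finset.sum_congr rfl fun x hx => ?_
          rw [hw1, Function.update_of_ne (Finset.ne_of_mem_erase hx)]
        have h4 : w1 a = w a - 1 := by rw [hw1, Function.update_self]
        omega
      have hsum1' : ∑ q, w1' q = N := by
        have h1 : w' b + ∑ q ∈ Finset.univ.erase b, w' q = ∑ q, w' q :=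
          Finset.add_sum_erase _ w' (Finset.mem_univ b)
        have h2 : w1' b + ∑ q ∈ Finset.univ.erase b, w1' q = ∑ q, w1' q :=
          Finset.add_sum_erase _ w1' (Finset.mem_univ b)
        have h3 : ∑ q ∈ Finset.univ.erase b, w1' q = ∑ q ∈ Finset.univ.erase b, w' q := by
          refine Finset.sum_congr rfl fun x hx => ?_
          rw [hw1', Function.update_of_ne (Finset.ne_of_mem_erase hx)]
        have h4 : w1' b = w' b - 1 := by rw [hw1', Function.update_self]
        omega
      obtain ⟨m, hrow, hcol⟩ := ih w1 w1' hsum1 hsum1'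
      refine ⟨fun x y => m x y + if x = a ∧ y = b then 1 else 0, fun x => ?_, fun y => ?_⟩
      · rw [Finset.sum_add_distrib, hrow]
        have : (∑ y, if x = a ∧ y = b then 1 else 0) = if x = a then 1 else 0 := by
          by_cases hxa : x = a <;> simp [hxa, Finset.sum_ite_eq']
        rw [this]
        by_cases hxa : x = a
        · subst hxa
          rw [if_pos rfl, hw1, Function.update_self]
          omega
        · rw [hw1, Function.update_of_ne hxa, if_neg hxa, Nat.add_zero]
      · rw [Finset.sum_add_distrib, hcol]
        have : (∑ x, if x = a ∧ y = b then 1 else 0) = if y = b then 1 else 0 := by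
          by_cases hyb : y = b <;> simp [hyb, Finset.sum_ite_eq']
        rw [this]
        by_cases hyb : y = b
        · subst hyb
          rw [if_pos rfl, hw1', Function.update_self]
          omega
        · rw [hw1', Function.update_of_ne hyb, if_neg hyb, Nat.add_zero]

end AggAux

open AggAux in
theorem aggregate_controllability {Q : Type*} [Fintype Q] (E : Q → Q → Prop)
    (hconn : ∀ q q' : Q, ∃ n, 0 < n ∧ Walk E n q q')
    (haper : ∀ d : ℕ, (∀ n (q : Q), 0 < n → Walk E n q q → d ∣ n) → d = 1)
    (N : ℕ) (w w' : Q → ℕ) (hw : ∑ q, w q = N) (hw' : ∑ q, w' q = N) :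
    ∃ (T : ℕ) (ws : ℕ → Q → ℕ) (r : ℕ → Q → Q → ℕ),
      ws 0 = w ∧ ws T = w' ∧
      ∀ s < T,
        (∀ q q', r s q q' ≠ 0 → E q q') ∧
        (∀ q, ∑ q', r s q q' = ws s q) ∧
        (∀ q', ∑ q, r s q q' = ws (s + 1) q') := by
  classical
  by_cases hQ : Nonempty Q
  swap
  · rw [not_nonempty_iff] at hQ
    have hww : w = w' := funext fun q => isEmptyElim q
    exact ⟨0, fun _ => w, fun _ _ _ => 0, rfl, hww.symm ▸ rfl,
      fun s hs => absurd hs (Nat.not_lt_zero s)⟩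
  obtain ⟨q0⟩ := hQ
  set C : ℕ → Prop := fun n => Walk E n q0 q0 with hC
  have h0 : C 0 := rfl
  have hadd : ∀ m n, C m → C n → C (m + n) := fun m n hm hn => walk_trans hm hn
  -- minimal positive gcd of a finite set of cycle lengths
  have hPdex : ∃ d, 0 < d ∧ ∃ A : Finset ℕ, (∀ x ∈ A, C x) ∧ A.gcd id = d := by
    obtain ⟨n, hn, hwn⟩ := hconn q0 q0
    refine ⟨n, hn, {n}, by simpa [hC] using hwn, ?_⟩
    simp [Finset.gcd_singleton]
  obtain ⟨hdpos, A, hAC, hAg⟩ := Nat.find_spec hPdex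
  have hddvd : ∀ n, C n → Nat.find hPdex ∣ n := by
    intro n hn
    by_contra hnd
    have h1 : Nat.gcd n (Nat.find hPdex) ∣ Nat.find hPdex := Nat.gcd_dvd_right _ _
    have h2 : 0 < Nat.gcd n (Nat.find hPdex) := Nat.gcd_pos_of_pos_right _ hdpos
    have h3 : Nat.gcd n (Nat.find hPdex) ≠ Nat.find hPdex :=
      fun hh => hnd (hh ▸ Nat.gcd_dvd_left n (Nat.find hPdex))
    have h4 : Nat.gcd n (Nat.find hPdex) < Nat.find hPdex :=
      lt_of_le_of_ne (Nat.le_of_dvd hdpos h1) h3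
    refine Nat.find_min hPdex h4 ⟨h2, insert n A, ?_, ?_⟩
    · intro x hx
      rcases Finset.mem_insert.mp hx with h | h
      · subst h; exact hn
      · exact hAC x h
    · rw [Finset.gcd_insert]
      show Nat.gcd (id n) (A.gcd id) = Nat.gcd n (Nat.find hPdex)
      rw [hAg]
      rfl
  have hd1 : Nat.find hPdex = 1 := by
    apply haper
    intro n q hn hwq
    obtain ⟨x, _, hx⟩ := hconn q0 q
    obtain ⟨y, _, hy⟩ := hconn q q0
    have hc1 : C (x + y) := walk_trans hx hy
    have hc2 : C (x + (n + y)) := walk_trans hx (walk_trans hwq hy)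
    have hdv1 := hddvd _ hc1
    have hdv2 := hddvd _ hc2
    have : x + (n + y) - (x + y) = n := by omega
    have := Nat.dvd_sub hdv2 hdv1
    rwa [show x + (n + y) - (x + y) = n from by omega] at this
  rw [hd1] at hAg
  obtain ⟨P, M, hP, hM, hPM⟩ := bezout h0 hadd A hAC
  rw [hAg] at hPM
  have hcof : ∀ n, C (M * M + n) := cofinite h0 hadd hP hM hPM
  -- uniform walk length T
  choose f hfpos hfw using fun q => hconn q q0
  choose g hgpos hgw using fun q => hconn q0 q
  set F := ∑ q, f q with hF
  set G := ∑ q, g q with hG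
  set T := M * M + F + G with hT
  have hTwalk : ∀ a b : Q, Walk E T a b := by
    intro a b
    have hfa : f a ≤ F := Finset.single_le_sum (fun i _ => Nat.zero_le _) (Finset.mem_univ a)
    have hgb : g b ≤ G := Finset.single_le_sum (fun i _ => Nat.zero_le _) (Finset.mem_univ b)
    have hcw : C (M * M + ((F - f a) + (G - g b))) := hcof _
    have hwalk := walk_trans (hfw a) (walk_trans hcw (hgw b))
    have heq : f a + (M * M + ((F - f a) + (G - g b)) + g b) = T := by omega
    rwa [heq] at hwalk
  choose p hp0 hpT hpe using fun a b => walk_path (hTwalk a b)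
  obtain ⟨m, hrow, hcol⟩ := transport N w w' hw hw'
  refine ⟨T, fun s q => ∑ a, ∑ b, if p a b s = q then m a b else 0,
    fun s q q' => ∑ a, ∑ b, if p a b s = q ∧ p a b (s + 1) = q' then m a b else 0,
    ?_, ?_, ?_⟩
  · funext q
    simp only [hp0]
    rw [Finset.sum_congr rfl (fun a _ => by
      by_cases hqa : a = q <;> simp [hqa, hrow] : ∀ a ∈ Finset.univ,
        (∑ b, if a = q then m a b else 0) = if a = q then w a else 0)]
    · simp [Finset.sum_ite_eq']
  · funext q
    simp only [hpT]
    rw [Finset.sum_congr rfl (fun a _ => by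
      simp [Finset.sum_ite_eq'] : ∀ a ∈ Finset.univ,
        (∑ b, if b = q then m a b else 0) = m a q)]
    exact hcol q
  · intro s hs
    refine ⟨?_, ?_, ?_⟩
    · intro q q' hne
      by_contra hE
      apply hne
      refine Finset.sum_eq_zero fun a _ => Finset.sum_eq_zero fun b _ => ?_
      rw [if_neg]
      rintro ⟨h1, h2⟩
      exact hE (h1 ▸ h2 ▸ hpe a b s hs)
    · intro q
      rw [Finset.sum_comm]
      refine Finset.sum_congr rfl fun a _ => ?_
      rw [Finset.sum_comm]
      refine Finset.sum_congr rfl fun b _ => ?_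
      by_cases h : p a b s = q <;> simp [h, Finset.sum_ite_eq]
    · intro q'
      rw [Finset.sum_comm]
      refine Finset.sum_congr rfl fun a _ => ?_
      rw [Finset.sum_comm]
      refine Finset.sum_congr rfl fun b _ => ?_
      by_cases h : p a b (s + 1) = q' <;> simp [h, Finset.sum_ite_eq']
end

section
/- Let C be a cycle of length L with X-indicator x : Fin L → {0,1} that decomposes at a repeated node into two cycles C1 (indices 0,...,m−1) and C2 (indices m,...,L−1), with m + n = L. Let α : Fin L → ℝ≥0 with max_s Σ_{i∈Fin L} x(i)·α^{↺s}(i) ≤ R and N = Σ_i α(i). Define constant assignments ᾱ1(i1) = N/L on Fin m and ᾱ2(i2) = N/L on Fin n (total weights (m/L)N and (n/L)N respectively). Then for every s, Σ_{i1∈Fin m} x(i1)·ᾱ1^{↺s}(i1) + Σ_{i2∈Fin n} x(m+i2)·ᾱ2^{↺s}(i2) ≤ R. -/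
lemma inv_aux (i L : ℕ) (hL : 0 < L) {s : ℕ} (hs : s < L) :
    (i + (L - (i + (L - s)) % L)) % L = s := by
  set a := (i + (L - s)) % L with ha
  have haL : a < L := Nat.mod_lt _ hL
  have h1 : a ≡ i + (L - s) [MOD L] := Nat.mod_modEq (i + (L - s)) L
  have h2 : (i + (L - a)) + a = (i + (L - s)) + s := by omega
  have h3 : (i + (L - a)) + a ≡ s + a [MOD L] := by
    rw [h2]
    calc (i + (L - s)) + s ≡ a + s [MOD L] := h1.symm.add_right s
      _ = s + a := by omega
  have h4 : (i + (L - a)) ≡ s [MOD L] := h3.add_right_cancel' a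
  calc (i + (L - a)) % L = s % L := h4
    _ = s := Nat.mod_eq_of_lt hs

lemma shift_sum (α : ℕ → ℝ) (i L : ℕ) (hL : 0 < L) :
    ∑ s ∈ Finset.range L, α ((i + (L - s)) % L) = ∑ j ∈ Finset.range L, α j := by
  refine Finset.sum_nbij' (fun s => (i + (L - s)) % L) (fun j => (i + (L - j)) % L)
    ?_ ?_ ?_ ?_ ?_
  · intro s hs
    exact Finset.mem_range.mpr (Nat.mod_lt _ hL)
  · intro j hj
    exact Finset.mem_range.mpr (Nat.mod_lt _ hL)
  · intro s hs
    exact inv_aux i L hL (Finset.mem_range.mp hs)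
  · intro j hj
    exact inv_aux i L hL (Finset.mem_range.mp hj)
  · intro s hs
    rfl

theorem split_cycle_average (m n L : ℕ) (hm : 0 < m) (hn : 0 < n) (hL : L = m + n)
    (x α : ℕ → ℝ) (hx : ∀ i, x i = 0 ∨ x i = 1) (hα : ∀ i, 0 ≤ α i)
    (N R : ℝ) (hN : N = ∑ i ∈ Finset.range L, α i)
    (hcnt : (⨆ s : ℕ, xcount L x α s) ≤ R) :
    ∀ s : ℕ,
      xcount m x (fun _ => N / L) s
        + xcount n (fun i => x (m + i)) (fun _ => N / L) s ≤ R := by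
  intro s
  have hL0 : 0 < L := by omega
  -- every xcount is ≤ R
  have hper : ∀ t : ℕ, xcount L x α t = xcount L x α (t % L) := by
    intro t
    unfold xcount
    simp [Nat.mod_mod_of_dvd]
  have hbdd : BddAbove (Set.range (xcount L x α)) := by
    have hsub : Set.range (xcount L x α) ⊆ (xcount L x α) '' ↑(Finset.range L) := by
      rintro y ⟨t, rfl⟩
      exact ⟨t % L, by simpa using Nat.mod_lt _ hL0, (hper t).symm⟩
    exact ((Finset.range L).finite_toSet.image _).bddAbove.mono hsub
  have hle : ∀ t : ℕ, xcount L x α t ≤ R :=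
    fun t => le_trans (le_ciSup hbdd t) hcnt
  -- sum of xcounts over a full period
  have hsum : ∑ t ∈ Finset.range L, xcount L x α t
      = (∑ i ∈ Finset.range L, x i) * N := by
    unfold xcount
    rw [Finset.sum_comm]
    rw [Finset.sum_mul]
    refine Finset.sum_congr rfl fun i _ => ?_
    rw [← Finset.mul_sum]
    congr 1
    calc ∑ t ∈ Finset.range L, α ((i + (L - t % L)) % L)
        = ∑ t ∈ Finset.range L, α ((i + (L - t)) % L) := by
          refine Finset.sum_congr rfl fun t ht => ?_
          rw [Nat.mod_eq_of_lt (Finset.mem_range.mp ht)]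
      _ = N := by rw [shift_sum α i L hL0, hN]
  -- some shift attains at least the average
  obtain ⟨t0, _, ht0⟩ : ∃ t0 ∈ Finset.range L,
      (∑ i ∈ Finset.range L, x i) * N / L ≤ xcount L x α t0 := by
    by_contra h
    push_neg at h
    have : ∑ t ∈ Finset.range L, xcount L x α t
        < ∑ _t ∈ Finset.range L, (∑ i ∈ Finset.range L, x i) * N / L := by
      refine Finset.sum_lt_sum_of_nonempty ⟨0, Finset.mem_range.mpr hL0⟩ ?_
      intro t ht; exact h t ht
    rw [hsum, Finset.sum_const, Finset.card_range, nsmul_eq_mul] at this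
    have hLne : (L : ℝ) ≠ 0 := Nat.cast_ne_zero.mpr hL0.ne'
    have heq : (L : ℝ) * ((∑ i ∈ Finset.range L, x i) * N / L)
        = (∑ i ∈ Finset.range L, x i) * N := by
      field_simp
    rw [heq] at this
    exact lt_irrefl _ this
  -- compute LHS
  have hlhs : xcount m x (fun _ => N / L) s
      + xcount n (fun i => x (m + i)) (fun _ => N / L) s
      = (∑ i ∈ Finset.range L, x i) * N / L := by
    unfold xcount
    rw [hL, Finset.sum_range_add x m n, ← Finset.sum_mul, ← Finset.sum_mul,
      ← add_mul, mul_div_assoc]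
  rw [hlhs]
  exact le_trans ht0 (hle t0)
end
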